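/- Let ξ, η : ℝ³ → ℝ be smooth functions of (t,x,u) satisfying the determining system (i) ξ_uu = 0; (ii) −2ξ_xu − 2ξ_u·ξ + 2u·ξ_u + η_uu = 0; (iii) 2η_xu + 2ξ_u·η + η − ξ_t + u·ξ_x − ξ_xx − 2ξ_x·ξ = 0; (iv) η_t + u·η_x + η_xx + 2ξ_x·η = 0 at every point of ℝ³. Then there exist a constant c ∈ {0, 1, −1/2} and smooth functions ξ⁰, η¹, η⁰ : ℝ² → ℝ of (t,x) such that ξ(t,x,u) = c·u + ξ⁰(t,x) and η(t,x,u) = (1/3)·c·(c−1)·u³ + c·ξ⁰(t,x)·u² + η¹(t,x)·u + η⁰(t,x), and moreover c·ξ⁰·(2c+1) = 0, (2c+1)·η¹ + 2c·ξ⁰_x + ξ⁰_x = 0, and ξ⁰_t + 2ξ⁰·ξ⁰_x + ξ⁰_xx − (2c+1)·η⁰ − 2η¹_x = 0 hold at every point (t,x). -/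

import Mathlib

/-- Partial derivative with respect to the first variable `t` (of three). -/
noncomputable def p1 (f : ℝ × ℝ × ℝ → ℝ) : ℝ × ℝ × ℝ → ℝ :=
  fun p => deriv (fun s => f (s, p.2.1, p.2.2)) p.1

/-- Partial derivative with respect to the second variable `x` (of three). -/
noncomputable def p2 (f : ℝ × ℝ × ℝ → ℝ) : ℝ × ℝ × ℝ → ℝ :=
  fun p => deriv (fun s => f (p.1, s, p.2.2)) p.2.1

/-- Partial derivative with respect to the third variable `u` (of three). -/
noncomputable def p3 (f : ℝ × ℝ × ℝ → ℝ) : ℝ × ℝ × ℝ → ℝ :=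
  fun p => deriv (fun s => f (p.1, p.2.1, s)) p.2.2

/-- Partial derivative with respect to the first variable `t` (of two). -/
noncomputable def pt (f : ℝ × ℝ → ℝ) : ℝ × ℝ → ℝ :=
  fun p => deriv (fun s => f (s, p.2)) p.1

/-- Partial derivative with respect to the second variable `x` (of two). -/
noncomputable def px (f : ℝ × ℝ → ℝ) : ℝ × ℝ → ℝ :=
  fun p => deriv (fun s => f (p.1, s)) p.2



lemma hasDerivAt_sec3 {f : ℝ × ℝ × ℝ → ℝ} (hf : ContDiff ℝ (⊤ : ℕ∞) f) (t x u : ℝ) :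
    HasDerivAt (fun s => f (t, x, s)) (fderiv ℝ f (t, x, u) (0, 0, 1)) u := by
  have hL : HasDerivAt (fun s : ℝ => ((t, x, s) : ℝ × ℝ × ℝ)) (0, 0, 1) u :=
    HasDerivAt.prodMk (hasDerivAt_const u t) (HasDerivAt.prodMk (hasDerivAt_const u x) (hasDerivAt_id u))
  exact ((hf.differentiable (by simp) (t, x, u)).hasFDerivAt).comp_hasDerivAt u hL

lemma p3_eq {f : ℝ × ℝ × ℝ → ℝ} (hf : ContDiff ℝ (⊤ : ℕ∞) f) (p : ℝ × ℝ × ℝ) :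
    p3 f p = fderiv ℝ f p (0, 0, 1) := (hasDerivAt_sec3 hf p.1 p.2.1 p.2.2).deriv

lemma contDiff_p3 {f : ℝ × ℝ × ℝ → ℝ} (hf : ContDiff ℝ (⊤ : ℕ∞) f) : ContDiff ℝ (⊤ : ℕ∞) (p3 f) := by
  have : p3 f = fun p => fderiv ℝ f p (0, 0, 1) := funext fun p => p3_eq hf p
  rw [this]
  exact (hf.fderiv_right (by simp)).clm_apply contDiff_const

lemma hasDerivAt_secx {f : ℝ × ℝ → ℝ} (hf : ContDiff ℝ (⊤ : ℕ∞) f) (t x : ℝ) :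
    HasDerivAt (fun s => f (t, s)) (fderiv ℝ f (t, x) (0, 1)) x := by
  have hL : HasDerivAt (fun s : ℝ => ((t, s) : ℝ × ℝ)) (0, 1) x :=
    HasDerivAt.prodMk (hasDerivAt_const x t) (hasDerivAt_id x)
  exact ((hf.differentiable (by simp) (t, x)).hasFDerivAt).comp_hasDerivAt x hL

lemma hasDerivAt_sect {f : ℝ × ℝ → ℝ} (hf : ContDiff ℝ (⊤ : ℕ∞) f) (t x : ℝ) :
    HasDerivAt (fun s => f (s, x)) (fderiv ℝ f (t, x) (1, 0)) t := by
  have hL : HasDerivAt (fun s : ℝ => ((s, x) : ℝ × ℝ)) (1, 0) t :=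
    HasDerivAt.prodMk (hasDerivAt_id t) (hasDerivAt_const t x)
  exact ((hf.differentiable (by simp) (t, x)).hasFDerivAt).comp_hasDerivAt t hL

lemma px_eq {f : ℝ × ℝ → ℝ} (hf : ContDiff ℝ (⊤ : ℕ∞) f) (q : ℝ × ℝ) :
    px f q = fderiv ℝ f q (0, 1) := (hasDerivAt_secx hf q.1 q.2).deriv

lemma contDiff_px {f : ℝ × ℝ → ℝ} (hf : ContDiff ℝ (⊤ : ℕ∞) f) : ContDiff ℝ (⊤ : ℕ∞) (px f) := by
  have : px f = fun q => fderiv ℝ f q (0, 1) := funext fun q => px_eq hf q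
  rw [this]
  exact (hf.fderiv_right (by simp)).clm_apply contDiff_const

/-- section in x of a smooth two-variable function has a derivative equal to `px`. -/
lemma hasDerivAt_px {f : ℝ × ℝ → ℝ} (hf : ContDiff ℝ (⊤ : ℕ∞) f) (t x : ℝ) :
    HasDerivAt (fun s => f (t, s)) (px f (t, x)) x := by
  have := hasDerivAt_secx hf t x
  rwa [show fderiv ℝ f (t, x) (0, 1) = px f (t, x) from (px_eq hf (t, x)).symm] at this

lemma hasDerivAt_pt {f : ℝ × ℝ → ℝ} (hf : ContDiff ℝ (⊤ : ℕ∞) f) (t x : ℝ) :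
    HasDerivAt (fun s => f (s, x)) (pt f (t, x)) t := by
  have h := hasDerivAt_sect hf t x
  have : pt f (t, x) = fderiv ℝ f (t, x) (1, 0) := h.deriv.symm ▸ rfl
  · rw [show pt f (t,x) = deriv (fun s => f (s, x)) t from rfl, h.deriv]; exact h

/-- second deriv zero implies affine -/
lemma affine_of_deriv2 {g : ℝ → ℝ} (hg : ContDiff ℝ (⊤ : ℕ∞) g)
    (h : ∀ u, deriv (deriv g) u = 0) : ∀ u, g u = g 0 + deriv g 0 * u := by
  have hd : Differentiable ℝ g := hg.differentiable (by norm_num)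
  have hd' : Differentiable ℝ (deriv g) :=
    ((contDiff_infty_iff_deriv.mp (hg.of_le (by simp))).2).differentiable (by norm_num)
  have hc : ∀ u, deriv g u = deriv g 0 := fun u => is_const_of_deriv_eq_zero hd' h u 0
  intro u
  have key : ∀ v, deriv (fun w => g w - deriv g 0 * w) v = 0 := by
    intro v
    have : HasDerivAt (fun w => g w - deriv g 0 * w) (deriv g v - deriv g 0 * 1) v :=
      (hd v).hasDerivAt.sub ((hasDerivAt_id v).const_mul (deriv g 0))
    rw [this.deriv, hc v]; ring
  have hdd : Differentiable ℝ (fun w => g w - deriv g 0 * w) :=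
    hd.sub ((differentiable_id.const_mul _))
  have := is_const_of_deriv_eq_zero hdd key u 0
  simp at this; linarith

/-- second deriv linear implies cubic -/
lemma cubic_of_deriv2 {g : ℝ → ℝ} (b c : ℝ) (hg : ContDiff ℝ (⊤ : ℕ∞) g)
    (h : ∀ u, deriv (deriv g) u = 2 * b + 6 * c * u) :
    ∀ u, g u = g 0 + deriv g 0 * u + b * u ^ 2 + c * u ^ 3 := by
  set D : ℝ → ℝ := fun u => g u - b * u ^ 2 - c * u ^ 3 with hD
  have hpoly : ContDiff ℝ (⊤ : ℕ∞) (fun u : ℝ => b * u ^ 2 + c * u ^ 3) := by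
    apply ContDiff.add
    · exact contDiff_const.mul (contDiff_id.pow 2)
    · exact contDiff_const.mul (contDiff_id.pow 3)
  have hDc : ContDiff ℝ (⊤ : ℕ∞) D := by
    have : D = fun u => g u - (b * u ^ 2 + c * u ^ 3) := by funext u; simp [hD]; ring
    rw [this]; exact hg.sub hpoly
  have hd : Differentiable ℝ g := hg.differentiable (by norm_num)
  have hpd : ∀ u : ℝ, HasDerivAt (fun u : ℝ => b * u ^ 2 + c * u ^ 3)
      (b * (2 * u) + c * (3 * u ^ 2)) u := by
    intro u
    have h1 : HasDerivAt (fun u : ℝ => b * u ^ 2) (b * ((2:ℕ) * u ^ (2-1))) u :=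
      (hasDerivAt_pow 2 u).const_mul b
    have h2 : HasDerivAt (fun u : ℝ => c * u ^ 3) (c * ((3:ℕ) * u ^ (3-1))) u :=
      (hasDerivAt_pow 3 u).const_mul c
    have := h1.add h2
    refine this.congr_deriv ?_
    push_cast; ring
  have hD' : ∀ u, deriv D u = deriv g u - (b * (2 * u) + c * (3 * u ^ 2)) := by
    intro u
    have : HasDerivAt D (deriv g u - (b * (2 * u) + c * (3 * u ^ 2))) u := by
      have := (hd u).hasDerivAt.sub (hpd u)
      apply this.congr_of_eventuallyEq
      filter_upwards with w; simp [hD]; ring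
    exact this.deriv
  have hdg' : Differentiable ℝ (deriv g) :=
    ((contDiff_infty_iff_deriv.mp (hg.of_le (by simp))).2).differentiable (by norm_num)
  have hDD : ∀ u, deriv (deriv D) u = 0 := by
    intro u
    have e : deriv D = fun u => deriv g u - (b * (2 * u) + c * (3 * u ^ 2)) := funext hD'
    rw [e]
    have h1 : HasDerivAt (fun u : ℝ => b * (2 * u) + c * (3 * u ^ 2))
        (2 * b + 6 * c * u) u := by
      have ha : HasDerivAt (fun u : ℝ => b * (2 * u)) (b * (2 * 1)) u :=
        ((hasDerivAt_id u).const_mul (2:ℝ)).const_mul b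
      have hb : HasDerivAt (fun u : ℝ => c * (3 * u ^ 2)) (c * (3 * ((2:ℕ) * u ^ (2-1)))) u :=
        (((hasDerivAt_pow 2 u).const_mul (3:ℝ)).const_mul c)
      have := ha.add hb
      refine this.congr_deriv ?_
      push_cast; ring
    have : HasDerivAt (fun u => deriv g u - (b * (2 * u) + c * (3 * u ^ 2)))
        (deriv (deriv g) u - (2 * b + 6 * c * u)) u :=
      ((hdg' u).hasDerivAt).sub h1
    rw [this.deriv, h u]; ring
  have haff := affine_of_deriv2 hDc hDD
  intro u
  have h0 : D 0 = g 0 := by simp [hD]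
  have hd0 : deriv D 0 = deriv g 0 := by rw [hD' 0]; ring
  have := haff u
  rw [h0, hd0] at this
  simp only [hD] at this
  linarith


lemma deriv_affine (a b u : ℝ) : deriv (fun s : ℝ => a * s + b) u = a := by
  have h : HasDerivAt (fun s : ℝ => a * s + b) (a * 1) u :=
    ((hasDerivAt_id u).const_mul a).add_const b
  rw [h.deriv]; ring

lemma deriv_cubic (a b cc d u : ℝ) :
    deriv (fun s : ℝ => a * s ^ 3 + b * s ^ 2 + cc * s + d) u
      = 3 * a * u ^ 2 + 2 * b * u + cc := by
  have h : HasDerivAt (fun s : ℝ => a * s ^ 3 + b * s ^ 2 + cc * s + d)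
      (a * ((3 : ℕ) * u ^ (3 - 1)) + b * ((2 : ℕ) * u ^ (2 - 1)) + cc * 1) u :=
    ((((hasDerivAt_pow 3 u).const_mul a).add ((hasDerivAt_pow 2 u).const_mul b)).add
      ((hasDerivAt_id u).const_mul cc)).add_const d
  rw [h.deriv]; push_cast; ring

lemma poly3_coeffs (a3 a2 a1 a0 : ℝ)
    (h : ∀ u : ℝ, a3 * u ^ 3 + a2 * u ^ 2 + a1 * u + a0 = 0) :
    a3 = 0 ∧ a2 = 0 ∧ a1 = 0 ∧ a0 = 0 := by
  have e0 := h 0; have e1 := h 1; have e2 := h (-1); have e3 := h 2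
  norm_num at e0 e1 e2 e3
  refine ⟨by linarith, by linarith, by linarith, by linarith⟩

lemma const_of_finite {A : ℝ × ℝ → ℝ} (hA : Continuous A) (T : Set ℝ) (hT : T.Finite)
    (hmem : ∀ q, A q ∈ T) : ∀ q, A q = A (0, 0) := by
  intro q
  by_contra hne
  have hconn : IsPreconnected (Set.range A) := by
    rw [← Set.image_univ]
    exact isPreconnected_univ.image A hA.continuousOn
  have hoc : Set.OrdConnected (Set.range A) := hconn.ordConnected
  have h1 : min (A q) (A (0, 0)) ∈ Set.range A := by
    rcases min_choice (A q) (A (0, 0)) with h | h <;> rw [h]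
    exacts [⟨q, rfl⟩, ⟨(0, 0), rfl⟩]
  have h2 : max (A q) (A (0, 0)) ∈ Set.range A := by
    rcases max_choice (A q) (A (0, 0)) with h | h <;> rw [h]
    exacts [⟨q, rfl⟩, ⟨(0, 0), rfl⟩]
  have hlt : min (A q) (A (0, 0)) < max (A q) (A (0, 0)) := min_lt_max.mpr hne
  have hinf : (Set.Icc (min (A q) (A (0, 0))) (max (A q) (A (0, 0)))).Infinite :=
    Set.Icc_infinite hlt
  have hsub : Set.Icc (min (A q) (A (0, 0))) (max (A q) (A (0, 0))) ⊆ T := by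
    intro y hy
    obtain ⟨p, hp⟩ := hoc.out h1 h2 hy
    exact hp ▸ hmem p
  exact hinf (hT.subset hsub)

/-- Solutions of the determining system for regular reduction operators of the
Burgers equation have the polynomial-in-`u` form with `ξ_u = c ∈ {0, 1, −1/2}` and
coefficients satisfying the reduced system. -/
theorem stmt15 (ξ η : ℝ × ℝ × ℝ → ℝ)
    (hξ : ContDiff ℝ (⊤ : ℕ∞) ξ) (hη : ContDiff ℝ (⊤ : ℕ∞) η)
    (h1 : ∀ p : ℝ × ℝ × ℝ, p3 (p3 ξ) p = 0)
    (h2 : ∀ p : ℝ × ℝ × ℝ,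
      -2 * p3 (p2 ξ) p - 2 * p3 ξ p * ξ p + 2 * p.2.2 * p3 ξ p + p3 (p3 η) p = 0)
    (h3 : ∀ p : ℝ × ℝ × ℝ,
      2 * p3 (p2 η) p + 2 * p3 ξ p * η p + η p - p1 ξ p + p.2.2 * p2 ξ p
        - p2 (p2 ξ) p - 2 * p2 ξ p * ξ p = 0)
    (h4 : ∀ p : ℝ × ℝ × ℝ,
      p1 η p + p.2.2 * p2 η p + p2 (p2 η) p + 2 * p2 ξ p * η p = 0) :
    ∃ (c : ℝ) (ξ0 η1 η0 : ℝ × ℝ → ℝ),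
      (c = 0 ∨ c = 1 ∨ c = -(1 / 2)) ∧
      ContDiff ℝ (⊤ : ℕ∞) ξ0 ∧ ContDiff ℝ (⊤ : ℕ∞) η1 ∧ ContDiff ℝ (⊤ : ℕ∞) η0 ∧
      (∀ p : ℝ × ℝ × ℝ, ξ p = c * p.2.2 + ξ0 (p.1, p.2.1)) ∧
      (∀ p : ℝ × ℝ × ℝ, η p =
        (1 / 3) * c * (c - 1) * p.2.2 ^ 3 + c * ξ0 (p.1, p.2.1) * p.2.2 ^ 2
          + η1 (p.1, p.2.1) * p.2.2 + η0 (p.1, p.2.1)) ∧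
      (∀ q : ℝ × ℝ, c * ξ0 q * (2 * c + 1) = 0) ∧
      (∀ q : ℝ × ℝ, (2 * c + 1) * η1 q + 2 * c * px ξ0 q + px ξ0 q = 0) ∧
      (∀ q : ℝ × ℝ, pt ξ0 q + 2 * ξ0 q * px ξ0 q + px (px ξ0) q
        - (2 * c + 1) * η0 q - 2 * px η1 q = 0) := by
  have hemb : ContDiff ℝ (⊤ : ℕ∞) (fun q : ℝ × ℝ => ((q.1, q.2, 0) : ℝ × ℝ × ℝ)) :=
    contDiff_fst.prodMk (contDiff_snd.prodMk contDiff_const)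
  set A : ℝ × ℝ → ℝ := fun q => p3 ξ (q.1, q.2, 0) with hAdef
  set X : ℝ × ℝ → ℝ := fun q => ξ (q.1, q.2, 0) with hXdef
  set H1 : ℝ × ℝ → ℝ := fun q => p3 η (q.1, q.2, 0) with hH1def
  set H0 : ℝ × ℝ → ℝ := fun q => η (q.1, q.2, 0) with hH0def
  have hsA : ContDiff ℝ (⊤ : ℕ∞) A := (contDiff_p3 hξ).comp hemb
  have hsX : ContDiff ℝ (⊤ : ℕ∞) X := hξ.comp hemb
  have hsH1 : ContDiff ℝ (⊤ : ℕ∞) H1 := (contDiff_p3 hη).comp hemb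
  have hsH0 : ContDiff ℝ (⊤ : ℕ∞) H0 := hη.comp hemb
  -- ξ is affine in u
  have hxi : ∀ t x u : ℝ, ξ (t, x, u) = A (t, x) * u + X (t, x) := by
    intro t x u
    have hg : ContDiff ℝ (⊤ : ℕ∞) (fun s => ξ (t, x, s)) :=
      hξ.comp (contDiff_const.prodMk (contDiff_const.prodMk contDiff_id))
    have hdd : ∀ v, deriv (deriv (fun s => ξ (t, x, s))) v = 0 := by
      intro v
      have h := h1 (t, x, v)
      simpa [p3] using h
    have key := affine_of_deriv2 hg hdd u
    have e1 : deriv (fun s => ξ (t, x, s)) 0 = A (t, x) := rfl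
    have e2 : ξ (t, x, 0) = X (t, x) := rfl
    rw [e1, e2] at key
    linarith
  have hp3xi : ∀ t x u : ℝ, p3 ξ (t, x, u) = A (t, x) := by
    intro t x u
    show deriv (fun s => ξ (t, x, s)) u = A (t, x)
    rw [show (fun s => ξ (t, x, s)) = fun s => A (t, x) * s + X (t, x) from
      funext fun s => hxi t x s]
    exact deriv_affine _ _ _
  have hp2xi : ∀ t x u : ℝ, p2 ξ (t, x, u) = px A (t, x) * u + px X (t, x) := by
    intro t x u
    show deriv (fun y => ξ (t, y, u)) x = _
    rw [show (fun y => ξ (t, y, u)) = fun y => A (t, y) * u + X (t, y) from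
      funext fun y => hxi t y u]
    exact (((hasDerivAt_px hsA t x).mul_const u).add (hasDerivAt_px hsX t x)).deriv
  have hp1xi : ∀ t x u : ℝ, p1 ξ (t, x, u) = pt A (t, x) * u + pt X (t, x) := by
    intro t x u
    show deriv (fun r => ξ (r, x, u)) t = _
    rw [show (fun r => ξ (r, x, u)) = fun r => A (r, x) * u + X (r, x) from
      funext fun r => hxi r x u]
    exact (((hasDerivAt_pt hsA t x).mul_const u).add (hasDerivAt_pt hsX t x)).deriv
  have hp2p2xi : ∀ t x u : ℝ,
      p2 (p2 ξ) (t, x, u) = px (px A) (t, x) * u + px (px X) (t, x) := by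
    intro t x u
    show deriv (fun y => p2 ξ (t, y, u)) x = _
    rw [show (fun y => p2 ξ (t, y, u)) = fun y => px A (t, y) * u + px X (t, y) from
      funext fun y => hp2xi t y u]
    exact (((hasDerivAt_px (contDiff_px hsA) t x).mul_const u).add
      (hasDerivAt_px (contDiff_px hsX) t x)).deriv
  have hp3p2xi : ∀ t x u : ℝ, p3 (p2 ξ) (t, x, u) = px A (t, x) := by
    intro t x u
    show deriv (fun s => p2 ξ (t, x, s)) u = _
    rw [show (fun s => p2 ξ (t, x, s)) = fun s => px A (t, x) * s + px X (t, x) from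
      funext fun s => hp2xi t x s]
    exact deriv_affine _ _ _
  -- η is cubic in u
  set B : ℝ × ℝ → ℝ := fun q => px A q + A q * X q with hBdef
  set C : ℝ × ℝ → ℝ := fun q => (1 / 3) * (A q * A q - A q) with hCdef
  have hsB : ContDiff ℝ (⊤ : ℕ∞) B := (contDiff_px hsA).add (hsA.mul hsX)
  have hsC : ContDiff ℝ (⊤ : ℕ∞) C := contDiff_const.mul ((hsA.mul hsA).sub hsA)
  have heta : ∀ t x u : ℝ,
      η (t, x, u) = C (t, x) * u ^ 3 + B (t, x) * u ^ 2 + H1 (t, x) * u + H0 (t, x) := by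
    intro t x u
    have hg : ContDiff ℝ (⊤ : ℕ∞) (fun s => η (t, x, s)) :=
      hη.comp (contDiff_const.prodMk (contDiff_const.prodMk contDiff_id))
    have hdd : ∀ v, deriv (deriv (fun s => η (t, x, s))) v
        = 2 * B (t, x) + 6 * C (t, x) * v := by
      intro v
      have h := h2 (t, x, v)
      have e : p3 (p3 η) (t, x, v) = deriv (deriv (fun s => η (t, x, s))) v := rfl
      rw [e, hp3p2xi t x v, hp3xi t x v, hxi t x v] at h
      try simp only [] at h
      have eB : B (t, x) = px A (t, x) + A (t, x) * X (t, x) := rfl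
      have eC : C (t, x) = 1 / 3 * (A (t, x) * A (t, x) - A (t, x)) := rfl
      rw [eB, eC]
      linear_combination h
    have key := cubic_of_deriv2 (B (t, x)) (C (t, x)) hg hdd u
    have e1 : deriv (fun s => η (t, x, s)) 0 = H1 (t, x) := rfl
    have e2 : η (t, x, 0) = H0 (t, x) := rfl
    rw [e1, e2] at key
    linarith
  have hp2eta : ∀ t x u : ℝ, p2 η (t, x, u)
      = px C (t, x) * u ^ 3 + px B (t, x) * u ^ 2 + px H1 (t, x) * u + px H0 (t, x) := by
    intro t x u
    show deriv (fun y => η (t, y, u)) x = _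
    rw [show (fun y => η (t, y, u))
        = fun y => C (t, y) * u ^ 3 + B (t, y) * u ^ 2 + H1 (t, y) * u + H0 (t, y) from
      funext fun y => heta t y u]
    exact ((((hasDerivAt_px hsC t x).mul_const _).add
      ((hasDerivAt_px hsB t x).mul_const _)).add
      ((hasDerivAt_px hsH1 t x).mul_const u)).add (hasDerivAt_px hsH0 t x) |>.deriv
  have hp3p2eta : ∀ t x u : ℝ, p3 (p2 η) (t, x, u)
      = 3 * px C (t, x) * u ^ 2 + 2 * px B (t, x) * u + px H1 (t, x) := by
    intro t x u
    show deriv (fun s => p2 η (t, x, s)) u = _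
    rw [show (fun s => p2 η (t, x, s))
        = fun s => px C (t, x) * s ^ 3 + px B (t, x) * s ^ 2 + px H1 (t, x) * s
          + px H0 (t, x) from funext fun s => hp2eta t x s]
    exact deriv_cubic _ _ _ _ u
  -- the polynomial identity from (iii)
  have key : ∀ t x : ℝ,
      (2 * A (t, x) + 1) * C (t, x) = 0 ∧
      6 * px C (t, x) + (2 * A (t, x) + 1) * B (t, x) + px A (t, x)
        - 2 * px A (t, x) * A (t, x) = 0 ∧
      4 * px B (t, x) + (2 * A (t, x) + 1) * H1 (t, x) - pt A (t, x) + px X (t, x)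
        - px (px A) (t, x) - 2 * px A (t, x) * X (t, x) - 2 * A (t, x) * px X (t, x) = 0 ∧
      2 * px H1 (t, x) + (2 * A (t, x) + 1) * H0 (t, x) - pt X (t, x)
        - px (px X) (t, x) - 2 * px X (t, x) * X (t, x) = 0 := by
    intro t x
    apply poly3_coeffs
    intro u
    have h := h3 (t, x, u)
    rw [hp3p2eta t x u, hp3xi t x u, heta t x u, hp1xi t x u, hp2xi t x u,
      hp2p2xi t x u, hxi t x u] at h
    try simp only [] at h
    linear_combination h
  -- A takes values in a finite set, hence is constant
  have hmem : ∀ q : ℝ × ℝ, A q ∈ ({0, 1, -(1 / 2)} : Set ℝ) := by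
    intro q
    obtain ⟨t, x⟩ := q
    have h := (key t x).1
    have h' : (2 * A (t, x) + 1) * (A (t, x) * (A (t, x) - 1)) = 0 := by
      have eC : C (t, x) = 1 / 3 * (A (t, x) * A (t, x) - A (t, x)) := rfl
      rw [eC] at h; linear_combination 3 * h
    rcases mul_eq_zero.mp h' with h'' | h''
    · right; right
      simp only [Set.mem_singleton_iff]
      linarith
    · rcases mul_eq_zero.mp h'' with h3' | h3'
      · left; exact h3'
      · right; left; linarith
  have hTfin : ({0, 1, -(1 / 2)} : Set ℝ).Finite :=
    (Set.finite_singleton _).insert _ |>.insert _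
  have hconst : ∀ q : ℝ × ℝ, A q = A (0, 0) :=
    const_of_finite hsA.continuous _ hTfin hmem
  set c : ℝ := A (0, 0) with hcdef
  have hc : c = 0 ∨ c = 1 ∨ c = -(1 / 2) := by
    have := hmem (0, 0)
    simpa [Set.mem_insert_iff, Set.mem_singleton_iff] using this
  -- derivatives of A vanish
  have hpxA : ∀ q : ℝ × ℝ, px A q = 0 := by
    intro q
    show deriv (fun s => A (q.1, s)) q.2 = 0
    rw [show (fun s => A (q.1, s)) = fun _ => c from funext fun s => hconst (q.1, s)]
    exact deriv_const _ _
  have hptA : ∀ q : ℝ × ℝ, pt A q = 0 := by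
    intro q
    show deriv (fun s => A (s, q.2)) q.1 = 0
    rw [show (fun s => A (s, q.2)) = fun _ => c from funext fun s => hconst (s, q.2)]
    exact deriv_const _ _
  have hpxpxA : ∀ q : ℝ × ℝ, px (px A) q = 0 := by
    intro q
    show deriv (fun s => px A (q.1, s)) q.2 = 0
    rw [show (fun s => px A (q.1, s)) = fun _ => (0:ℝ) from funext fun s => hpxA (q.1, s)]
    exact deriv_const _ _
  have hpxB : ∀ q : ℝ × ℝ, px B q = c * px X q := by
    intro q
    show deriv (fun s => B (q.1, s)) q.2 = _
    rw [show (fun s => B (q.1, s)) = fun s => c * X (q.1, s) from funext fun s => by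
      have eB : B (q.1, s) = px A (q.1, s) + A (q.1, s) * X (q.1, s) := rfl
      rw [eB, hpxA (q.1, s), hconst (q.1, s)]; ring]
    exact ((hasDerivAt_px hsX q.1 q.2).const_mul c).deriv
  have hpxC : ∀ q : ℝ × ℝ, px C q = 0 := by
    intro q
    show deriv (fun s => C (q.1, s)) q.2 = 0
    rw [show (fun s => C (q.1, s)) = fun _ => (1 / 3) * (c * c - c) from funext fun s => by
      have eC : C (q.1, s) = 1 / 3 * (A (q.1, s) * A (q.1, s) - A (q.1, s)) := rfl
      rw [eC, hconst (q.1, s)]]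
    exact deriv_const _ _
  refine ⟨c, X, H1, H0, hc, hsX, hsH1, hsH0, ?_, ?_, ?_, ?_, ?_⟩
  · rintro ⟨t, x, u⟩
    try simp only []
    rw [hxi t x u, hconst (t, x)]
    try ring
  · rintro ⟨t, x, u⟩
    try simp only []
    have eB : B (t, x) = px A (t, x) + A (t, x) * X (t, x) := rfl
    have eC : C (t, x) = 1 / 3 * (A (t, x) * A (t, x) - A (t, x)) := rfl
    rw [heta t x u, eB, eC, hconst (t, x), hpxA (t, x)]
    ring
  · rintro ⟨t, x⟩
    have h := (key t x).2.1
    have eB : B (t, x) = px A (t, x) + A (t, x) * X (t, x) := rfl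
    rw [hpxC (t, x), eB, hpxA (t, x), hconst (t, x)] at h
    linear_combination h
  · rintro ⟨t, x⟩
    have h := (key t x).2.2.1
    rw [hpxB (t, x), hptA (t, x), hpxpxA (t, x), hpxA (t, x), hconst (t, x)] at h
    linear_combination h
  · rintro ⟨t, x⟩
    have h := (key t x).2.2.2
    rw [hconst (t, x)] at h
    linear_combination -h
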